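/- If G is a finite simple graph on n vertices in which every pair of nonadjacent vertices has degree sum at least n (Ore's condition, with n ≥ 3), then every longest cycle of G is a Hamilton cycle. -/

import Mathlib

open SimpleGraph

/-- A "generalized cycle" of order `t` in a graph: a single vertex counts as a
cycle of order 1, an edge as a cycle of order 2, and otherwise a genuine cycle
on `t` distinct vertices. -/
def IsGenCycleOn {V : Type*} (G : SimpleGraph V) (t : ℕ) : Prop :=
  (t = 1 ∧ Nonempty V) ∨ (t = 2 ∧ ∃ u v, G.Adj u v) ∨
    (∃ (u : V) (c : G.Walk u u), c.IsCycle ∧ c.length = t)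

/-- The order of a longest generalized cycle in `G` (0 if `G` has no vertices). -/
noncomputable def cbar {V : Type*} (G : SimpleGraph V) : ℕ :=
  sSup {t | IsGenCycleOn G t}

/-- `G` is `k`-connected: more than `k` vertices, and removing fewer than `k`
vertices leaves a connected graph. -/
def KConnected {V : Type*} [Fintype V] (G : SimpleGraph V) (k : ℕ) : Prop :=
  k < Fintype.card V ∧
    ∀ S : Finset V, S.card < k → (G.induce ((↑S : Set V)ᶜ)).Connected

/-!
Bondy–Chvátal closure: if `deg u + deg w ≥ n`, then `G` has a Hamilton cycle as soon as
`G + uw` has one. Indeed, a Hamilton cycle of `G + uw` through `uw` leaves a Hamilton path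
`u = v₀, …, vₙ₋₁ = w` of `G`; the `deg u` indices `i` with `u ~ vᵢ` and the `deg w` indices
`i + 1` with `w ~ vᵢ` all lie in `{1, …, n - 1}`, so some `i` has `u ~ vᵢ₊₁` and `w ~ vᵢ`, and
`u … vᵢ w vₙ₋₂ … vᵢ₊₁ u` is a Hamilton cycle of `G`. Ore's condition survives adding edges,
so by induction one adds missing edges until the graph is complete, hence Hamiltonian.
A Hamilton cycle has `n` edges, the most a cycle can have, so every longest cycle has length
`n` and visits every vertex.
-/

namespace SimpleGraph

open Finset

variable {V : Type*} {G H : SimpleGraph V} {u v w : V}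

lemma degree_le_degree_of_le (hGH : G ≤ H) (v : V) [Fintype (G.neighborSet v)]
    [Fintype (H.neighborSet v)] : G.degree v ≤ H.degree v := by
  simp only [← card_neighborFinset_eq_degree]
  exact card_le_card fun x hx => by simpa using hGH (by simpa using hx)

lemma mem_edgeSet_of_mem_edgeSet_sup_edge {e : Sym2 V} (he : e ∈ (G ⊔ edge u w).edgeSet)
    (hne : e ≠ s(u, w)) : e ∈ G.edgeSet := by
  rw [edgeSet_sup] at he
  exact he.resolve_right fun h => hne (edgeSet_edge_subset h)

namespace Walk

lemma IsCycle.length_le_card [Fintype V] {c : G.Walk v v} (hc : c.IsCycle) :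
    c.length ≤ Fintype.card V := by
  have := hc.isPath_tail.length_lt
  rw [← length_tail_add_one hc.not_nil]
  omega

variable [DecidableEq V]

lemma IsHamiltonian.transfer {p : G.Walk u v} (hp : p.IsHamiltonian)
    (hH : ∀ e ∈ p.edges, e ∈ H.edgeSet) : (p.transfer H hH).IsHamiltonian := by
  simpa [IsHamiltonian, support_transfer] using hp

lemma IsHamiltonianCycle.transfer {c : G.Walk v v} (hc : c.IsHamiltonianCycle)
    (hH : ∀ e ∈ c.edges, e ∈ H.edgeSet) : (c.transfer H hH).IsHamiltonianCycle := by
  rw [isHamiltonianCycle_iff_isCycle_and_support_count_tail_eq_one] at hc ⊢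
  exact ⟨hc.1.transfer hH, by simpa [support_transfer] using hc.2⟩

protected lemma IsHamiltonianCycle.reverse {c : G.Walk v v} (hc : c.IsHamiltonianCycle) :
    c.reverse.IsHamiltonianCycle := by
  have := hc.finite
  cases nonempty_fintype V
  rw [isHamiltonianCycle_iff_isCycle_and_length_eq] at hc ⊢
  exact ⟨hc.1.reverse, by simpa using hc.2⟩

lemma IsHamiltonian.cons_isHamiltonianCycle [Fintype V] {p : G.Walk v u}
    (hp : p.IsHamiltonian) (h : G.Adj u v) (hn : 3 ≤ Fintype.card V) :
    (cons h p).IsHamiltonianCycle := by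
  have := hp.length_eq
  rw [isHamiltonianCycle_iff_isCycle_and_length_eq, isCycle_iff_isPath_tail_and_le_length]
  refine ⟨⟨by simpa using hp.isPath, ?_⟩, ?_⟩ <;> simp only [length_cons] <;> omega

lemma IsHamiltonian.card_filter_adj_getVert [Fintype V] [DecidableRel G.Adj] {p : G.Walk u v}
    (hp : p.IsHamiltonian) (x : V) :
    #{i ∈ range (p.length + 1) | G.Adj x (p.getVert i)} = G.degree x := by
  rw [← card_neighborFinset_eq_degree]
  refine card_bij (fun i _ => p.getVert i) ?_ ?_ ?_
  · intro i hi
    simpa using (mem_filter.mp hi).2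
  · intro i hi j hj hij
    simp only [mem_filter, mem_range] at hi hj
    exact hp.isPath.getVert_injOn (by rw [Set.mem_ofPred_eq]; omega)
      (by rw [Set.mem_ofPred_eq]; omega) hij
  · intro y hy
    obtain ⟨i, rfl, hi⟩ := mem_support_iff_exists_getVert.mp (hp.mem_support y)
    exact ⟨i, by simpa [Nat.lt_succ_iff, hi] using hy, rfl⟩

lemma IsHamiltonian.exists_adj_getVert_succ_adj_getVert [Fintype V] [DecidableRel G.Adj]
    {p : G.Walk u w} (hp : p.IsHamiltonian)
    (hdeg : Fintype.card V ≤ G.degree u + G.degree w) :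
    ∃ i < p.length, G.Adj u (p.getVert (i + 1)) ∧ G.Adj w (p.getVert i) := by
  set A := {i ∈ range (p.length + 1) | G.Adj u (p.getVert i)}
  set B := {i ∈ range (p.length + 1) | G.Adj w (p.getVert i)}.image (· + 1)
  have hA : A ⊆ Icc 1 p.length := by
    intro i hi
    simp only [A, mem_filter, mem_range] at hi
    have : i ≠ 0 := by rintro rfl; exact hi.2.ne (p.getVert_zero).symm
    simp only [mem_Icc]
    omega
  have hB : B ⊆ Icc 1 p.length := by
    intro j hj
    simp only [B, mem_image, mem_filter, mem_range] at hj
    obtain ⟨i, ⟨hi, hadj⟩, rfl⟩ := hj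
    have : i ≠ p.length := by rintro rfl; exact hadj.ne (p.getVert_length).symm
    simp only [mem_Icc]
    omega
  have hcard : #(Icc 1 p.length) < #A + #B := by
    rw [Nat.card_Icc, card_image_of_injective _ (add_left_injective 1),
      hp.card_filter_adj_getVert, hp.card_filter_adj_getVert, hp.length_eq]
    have : 0 < Fintype.card V := Fintype.card_pos_iff.mpr ⟨u⟩
    omega
  obtain ⟨j, hj⟩ := inter_nonempty_of_card_lt_card_add_card hA hB hcard
  simp only [A, B, mem_inter, mem_filter, mem_image, mem_range] at hj
  obtain ⟨⟨-, hu⟩, i, ⟨hi, hw⟩, rfl⟩ := hj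
  refine ⟨i, ?_, hu, hw⟩
  by_contra! hle
  exact hw.ne (p.getVert_of_length_le hle).symm

open List in
lemma IsHamiltonian.drop_append_cons_reverse_take {p : G.Walk u w} (hp : p.IsHamiltonian)
    {i : ℕ} (hi : i < p.length) (hw : G.Adj w (p.getVert i)) :
    ((p.drop (i + 1)).append (cons hw (p.take i).reverse)).IsHamiltonian := by
  have hperm : ((p.drop (i + 1)).append (cons hw (p.take i).reverse)).support ~ p.support := by
    rw [support_append, support_cons, List.tail_cons, support_reverse, support_take,
      drop_support_eq_support_drop_min, min_eq_left (by omega)]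
    calc _ ~ (p.support.take (i + 1)).reverse ++ p.support.drop (i + 1) := perm_append_comm
      _ ~ p.support.take (i + 1) ++ p.support.drop (i + 1) := (reverse_perm _).append_right _
      _ = p.support := take_append_drop _ _
  intro x
  rw [hperm.count_eq]
  exact hp x

theorem IsHamiltonian.exists_isHamiltonianCycle_of_le_degree_add_degree [Fintype V]
    [DecidableRel G.Adj] {p : G.Walk u w} (hp : p.IsHamiltonian) (hn : 3 ≤ Fintype.card V)
    (hdeg : Fintype.card V ≤ G.degree u + G.degree w) :
    ∃ (a : V) (c : G.Walk a a), c.IsHamiltonianCycle := by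
  obtain ⟨i, hi, hu, hw⟩ := hp.exists_adj_getVert_succ_adj_getVert hdeg
  exact ⟨u, _, (hp.drop_append_cons_reverse_take hi hw).cons_isHamiltonianCycle hu hn⟩

lemma IsHamiltonianCycle.exists_isHamiltonian_notMem_edges {c : G.Walk v v}
    (hc : c.IsHamiltonianCycle) (he : s(u, w) ∈ c.edges) :
    ∃ p : G.Walk w u, p.IsHamiltonian ∧ s(u, w) ∉ p.edges := by
  suffices key : ∀ d : G.Walk u u, d.IsHamiltonianCycle → d.snd = w →
      ∃ p : G.Walk w u, p.IsHamiltonian ∧ s(u, w) ∉ p.edges by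
    have hu : u ∈ c.support := c.fst_mem_support_of_mem_edges he
    have hd := hc.rotate hu
    have hw : w ∈ (c.rotate u hu).toSubgraph.neighborSet u :=
      adj_toSubgraph_iff_mem_edges.mpr ((rotate_edges c u hu).mem_iff.mpr he)
    rw [hd.isCycle.neighborSet_toSubgraph_endpoint] at hw
    rcases hw with hw | hw
    · exact key _ hd hw.symm
    · exact key _ hd.reverse (by simpa using hw.symm)
  rintro d hd rfl
  refine ⟨d.tail, hd.isHamiltonian_tail, fun h => ?_⟩
  have hnodup := hd.isCycle.edges_nodup
  rw [← d.cons_tail_eq hd.isCycle.not_nil, edges_cons, List.nodup_cons] at hnodup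
  exact hnodup.1 h

end Walk

open Walk

variable [DecidableEq V]

theorem exists_isHamiltonianCycle_of_forall_adj [Fintype V] (hn : 3 ≤ Fintype.card V)
    (h : ∀ u w, u ≠ w → G.Adj u w) : ∃ (a : V) (c : G.Walk a a), c.IsHamiltonianCycle := by
  let e := (Fintype.equivFin V).symm
  obtain ⟨a, c, hc, hlen⟩ := (cycleGraph_isContained_iff (G := G) hn).mp
    ⟨⟨⟨e, fun hxy => h _ _ (e.injective.ne hxy.ne)⟩, e.injective⟩⟩
  exact ⟨a, c, isHamiltonianCycle_iff_isCycle_and_length_eq.mpr ⟨hc, hlen⟩⟩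

theorem exists_isHamiltonianCycle_of_sup_edge [Fintype V] [DecidableRel G.Adj]
    (hn : 3 ≤ Fintype.card V) (hdeg : Fintype.card V ≤ G.degree u + G.degree w) {a : V}
    {c : (G ⊔ edge u w).Walk a a} (hc : c.IsHamiltonianCycle) :
    ∃ (b : V) (d : G.Walk b b), d.IsHamiltonianCycle := by
  by_cases he : s(u, w) ∈ c.edges
  · obtain ⟨p, hp, hpe⟩ := hc.exists_isHamiltonian_notMem_edges he
    have hpG : ∀ e ∈ p.edges, e ∈ G.edgeSet := fun e he' =>
      mem_edgeSet_of_mem_edgeSet_sup_edge (p.edges_subset_edgeSet he')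
        (by rintro rfl; exact hpe he')
    exact (hp.transfer hpG).exists_isHamiltonianCycle_of_le_degree_add_degree hn (by omega)
  · exact ⟨a, _, hc.transfer fun e he' =>
      mem_edgeSet_of_mem_edgeSet_sup_edge (c.edges_subset_edgeSet he')
        (by rintro rfl; exact he he')⟩

theorem exists_isHamiltonianCycle_of_ore [Fintype V] [DecidableRel G.Adj]
    (hn : 3 ≤ Fintype.card V)
    (hOre : ∀ u w, u ≠ w → ¬ G.Adj u w → Fintype.card V ≤ G.degree u + G.degree w) :
    ∃ (a : V) (c : G.Walk a a), c.IsHamiltonianCycle := by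
  revert hOre
  refine WellFoundedGT.induction (motive := fun G : SimpleGraph V => ∀ [DecidableRel G.Adj],
    (∀ u w, u ≠ w → ¬ G.Adj u w → Fintype.card V ≤ G.degree u + G.degree w) →
      ∃ (a : V) (c : G.Walk a a), c.IsHamiltonianCycle) G fun G ih _ hOre => ?_
  by_cases hcomplete : ∀ u w, u ≠ w → G.Adj u w
  · exact exists_isHamiltonianCycle_of_forall_adj hn hcomplete
  push Not at hcomplete
  obtain ⟨u, w, huw, hnadj⟩ := hcomplete
  have hlt : G < G ⊔ edge u w :=
    left_lt_sup.mpr fun h => hnadj (h ((edge_adj _ _ _ _).mpr ⟨Or.inl ⟨rfl, rfl⟩, huw⟩))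
  have hOre' : ∀ x y, x ≠ y → ¬ (G ⊔ edge u w).Adj x y →
      Fintype.card V ≤ (G ⊔ edge u w).degree x + (G ⊔ edge u w).degree y := fun x y hxy hnxy =>
    (hOre x y hxy fun h => hnxy (le_sup_left (a := G) h)).trans
      (add_le_add (degree_le_degree_of_le le_sup_left x) (degree_le_degree_of_le le_sup_left y))
  obtain ⟨a, c, hc⟩ := ih _ hlt hOre'
  exact exists_isHamiltonianCycle_of_sup_edge hn (hOre u w huw hnadj) hc

end SimpleGraph

/-- Ore: if `n ≥ 3` and every pair of distinct nonadjacent vertices has degree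
sum at least `n`, then every longest cycle is a Hamilton cycle. -/
theorem stmt_7 {V : Type*} [Fintype V] (G : SimpleGraph V)
    [DecidableRel G.Adj] (hn : 3 ≤ Fintype.card V)
    (hOre : ∀ u w : V, u ≠ w → ¬ G.Adj u w →
      Fintype.card V ≤ G.degree u + G.degree w)
    (v : V) (C : G.Walk v v) (hC : C.IsCycle)
    (hmax : ∀ (u : V) (Q : G.Walk u u), Q.IsCycle → Q.length ≤ C.length) :
    ∀ x : V, x ∈ C.support := by
  classical
  obtain ⟨a, H, hH⟩ := exists_isHamiltonianCycle_of_ore hn hOre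
  have hlen : C.length = Fintype.card V :=
    le_antisymm hC.length_le_card (hH.length_eq ▸ hmax a H hH.isCycle)
  exact (Walk.isHamiltonianCycle_iff_isCycle_and_length_eq.mpr ⟨hC, hlen⟩).mem_support
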